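/- Let n ≥ 1 and X_1,…,X_n ∈ ℝ. For a provisional value x ∈ ℝ set X_{n+1} = x and define the non-conformity scores μ_i(x) = X_i − Σ_{j ∈ {1,…,n+1}, j ≠ i} X_j for i = 1,…,n+1. Then (a) for each i ∈ {1,…,n}, μ_i(x) ≥ μ_{n+1}(x) if and only if x ≤ X_i; and (b) for every α ∈ (0,1) with (n+1)α not an integer and r := ⌊(n+1)α⌋ satisfying 1 ≤ r ≤ n, the conformal prediction region {x ∈ ℝ : #{i ∈ {1,…,n+1} : μ_i(x) ≥ μ_{n+1}(x)} > (n+1)α} equals the one-sided interval {x ∈ ℝ : x ≤ X_{(n+1−r)}}, where X_{(k)} denotes the k-th smallest value among X_1,…,X_n. -/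
import Mathlib

private lemma filter_perm_card {n : ℕ} (σ : Equiv.Perm (Fin n)) (p : Fin n → Prop)
    [DecidablePred p] :
    (Finset.univ.filter p).card = (Finset.univ.filter (fun i => p (σ i))).card := by
  apply Finset.card_bij (fun a _ => σ.symm a)
  · intro a ha
    simp only [Finset.mem_filter, Finset.mem_univ, true_and] at ha ⊢
    simpa using ha
  · intro a _ b _ h
    exact σ.symm.injective h
  · intro b hb
    refine ⟨σ b, ?_, by simp⟩
    simp only [Finset.mem_filter, Finset.mem_univ, true_and] at hb ⊢
    exact hb

private lemma count_mono {n : ℕ} (y : Fin n → ℝ) (hy : Monotone y) (r : ℕ)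
    (hr1 : 1 ≤ r) (hrn : r ≤ n) (x : ℝ) :
    r ≤ (Finset.univ.filter (fun i => x ≤ y i)).card ↔ x ≤ y ⟨n - r, by omega⟩ := by
  constructor
  · intro h
    by_contra hx
    push_neg at hx
    have hsub : (Finset.univ.filter (fun i => x ≤ y i)) ⊆
        Finset.Ioi (⟨n - r, by omega⟩ : Fin n) := by
      intro i hi
      simp only [Finset.mem_filter, Finset.mem_univ, true_and] at hi
      simp only [Finset.mem_Ioi, Fin.lt_def]
      by_contra hc
      push_neg at hc
      have : y i ≤ y ⟨n - r, by omega⟩ := hy (by simp only [Fin.le_def]; omega)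
      linarith
    have := Finset.card_le_card hsub
    rw [Fin.card_Ioi] at this
    have hval : ((⟨n - r, by omega⟩ : Fin n) : ℕ) = n - r := rfl
    rw [hval] at this
    omega
  · intro h
    have hsub : Finset.Ici (⟨n - r, by omega⟩ : Fin n) ⊆
        Finset.univ.filter (fun i => x ≤ y i) := by
      intro i hi
      simp only [Finset.mem_Ici] at hi
      simp only [Finset.mem_filter, Finset.mem_univ, true_and]
      exact le_trans h (hy hi)
    have := Finset.card_le_card hsub
    rw [Fin.card_Ici] at this
    simp only at this
    omega

/-- Theorem 7 of the paper (unsupervised learning): for the scores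
`μ_i(x) = X_i − Σ_{j ≠ i} X_j` (with `X_{n+1} = x`), (a) `μ_i(x) ≥ μ_{n+1}(x)`
iff `x ≤ X_i`, and (b) the conformal prediction region
`{x : #{i : μ_i(x) ≥ μ_{n+1}(x)} > (n+1)α}` is the one-sided interval
`(−∞, X_{(n+1−r)}]`, where `r = ⌊(n+1)α⌋` and `X_{(k)}` is the k-th smallest
of `X_1, …, X_n`. -/
theorem stmt_16
    (n : ℕ) (hn : 1 ≤ n)
    (X : Fin n → ℝ)
    (μ : ℝ → Fin (n + 1) → ℝ)
    (hμ : ∀ (x : ℝ) (i : Fin (n + 1)),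
      μ x i = (Fin.snoc X x : Fin (n + 1) → ℝ) i
        - ∑ j ∈ Finset.univ.erase i, (Fin.snoc X x : Fin (n + 1) → ℝ) j) :
    (∀ (x : ℝ) (i : Fin n),
      μ x (Fin.last n) ≤ μ x i.castSucc ↔ x ≤ X i) ∧
    (∀ (α : ℝ) (_ : α ∈ Set.Ioo (0 : ℝ) 1)
      (_ : ∀ k : ℤ, ((n : ℝ) + 1) * α ≠ (k : ℝ))
      (r : ℕ) (_ : (r : ℤ) = ⌊((n : ℝ) + 1) * α⌋) (_ : 1 ≤ r) (_ : r ≤ n),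
      {x : ℝ | ((n : ℝ) + 1) * α <
          ((Finset.univ.filter
            (fun i : Fin (n + 1) => μ x (Fin.last n) ≤ μ x i)).card : ℝ)}
        = Set.Iic ((X ∘ Tuple.sort X) ⟨n - r, by omega⟩)) := by
  -- μ x i = 2 * snoc i - total
  have hμ' : ∀ (x : ℝ) (i : Fin (n + 1)),
      μ x i = 2 * (Fin.snoc X x : Fin (n + 1) → ℝ) i
        - ∑ j, (Fin.snoc X x : Fin (n + 1) → ℝ) j := by
    intro x i
    rw [hμ, Finset.sum_erase_eq_sub (Finset.mem_univ i)]
    ring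
  have key : ∀ (x : ℝ) (i : Fin (n + 1)),
      (μ x (Fin.last n) ≤ μ x i ↔ x ≤ (Fin.snoc X x : Fin (n + 1) → ℝ) i) := by
    intro x i
    rw [hμ', hμ']
    simp only [Fin.snoc_last]
    constructor <;> intro h <;> linarith
  have parta : ∀ (x : ℝ) (i : Fin n),
      μ x (Fin.last n) ≤ μ x i.castSucc ↔ x ≤ X i := by
    intro x i
    rw [key]
    simp
  refine ⟨parta, ?_⟩
  intro α hα hni r hr hr1 hrn
  -- count over Fin (n+1) = 1 + count over Fin n
  have hcount : ∀ x : ℝ,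
      (Finset.univ.filter (fun i : Fin (n + 1) => μ x (Fin.last n) ≤ μ x i)).card
        = (Finset.univ.filter (fun i : Fin n => x ≤ X i)).card + 1 := by
    intro x
    rw [Finset.card_filter, Fin.sum_univ_castSucc, Finset.card_filter]
    have h1 : (if μ x (Fin.last n) ≤ μ x (Fin.last n) then 1 else 0) = 1 := by simp
    rw [h1]
    congr 1
    apply Finset.sum_congr rfl
    intro i _
    congr 1
    simp only [eq_iff_iff]
    exact parta x i
  set y : Fin n → ℝ := X ∘ Tuple.sort X with hy
  have hym : Monotone y := Tuple.monotone_sort X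
  have hcard : ∀ x : ℝ, (Finset.univ.filter (fun i : Fin n => x ≤ X i)).card
      = (Finset.univ.filter (fun i : Fin n => x ≤ y i)).card :=
    fun x => filter_perm_card (Tuple.sort X) (fun i => x ≤ X i)
  ext x
  simp only [Set.mem_setOf_eq, Set.mem_Iic]
  rw [hcount, hcard]
  set m := (Finset.univ.filter (fun i : Fin n => x ≤ y i)).card with hm
  have hfloor : (r : ℤ) = ⌊((n : ℝ) + 1) * α⌋ := hr
  have hlt1 : ((r : ℝ)) < ((n : ℝ) + 1) * α := by
    rcases lt_or_eq_of_le (Int.floor_le (((n : ℝ) + 1) * α)) with h | h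
    · rw [← hfloor] at h; exact_mod_cast h
    · exact absurd h.symm (hni ⌊((n : ℝ) + 1) * α⌋)
  have hlt2 : ((n : ℝ) + 1) * α < (r : ℝ) + 1 := by
    have := Int.lt_floor_add_one (((n : ℝ) + 1) * α)
    rw [← hfloor] at this
    exact_mod_cast this
  have hiff : (((n : ℝ) + 1) * α < ((m + 1 : ℕ) : ℝ)) ↔ r ≤ m := by
    constructor
    · intro h
      by_contra hc
      push_neg at hc
      have : ((m + 1 : ℕ) : ℝ) ≤ (r : ℝ) := by exact_mod_cast hc
      linarith
    · intro h
      have : (r : ℝ) + 1 ≤ ((m + 1 : ℕ) : ℝ) := by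
        push_cast; exact_mod_cast by omega
      linarith
  rw [hiff]
  exact count_mono y hym r hr1 hrn x
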